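/- Let f be a transcendental entire function, let R0 > 0 be such that M(r, f) > r for all r ≥ R0, and let ε : [R0, ∞) → (0, 1) be a nonincreasing function such that ε(M^n(r, f)) ≥ ε(r)^{n+1} for all r ≥ R0 and all n ≥ 1. Then there exists R1 ≥ R0 such that M(R, f) ≥ ε(r)^{-3} M(ε(r)R, f) for all R ≥ r ≥ R1. -/

import Mathlib

/-!
By Hadamard's three circles theorem, `x ↦ log M(eˣ, f)` is convex. For transcendental `f`,
Liouville's estimates show that `M(r, f)` eventually exceeds every power of `r`, so the slopes of
this convex function tend to infinity: for each `n` there is `ρ` with `M(t, f) ≥ (t/s)ⁿ M(s, f)`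
whenever `t ≥ s ≥ ρ`. With `n = 3`, `s = ε(r) R` and `t = R` this is the claim, as soon as
`ε(R) R ≥ ρ`. The latter holds for large `R`: the orbit `xₖ = Mᵏ(b, f)` satisfies
`xₖ₊₁ ≥ xₖ²`, and for `xₖ ≤ R < xₖ₊₁` the hypothesis on `ε` gives
`ε(R) R ≥ ε(b)ᵏ⁺² xₖ`, which tends to infinity with `k`.
-/

/-- The maximum modulus function `M(r, f) = max_{|z| = r} |f z|`. -/
noncomputable def maxMod (f : ℂ → ℂ) (r : ℝ) : ℝ :=
  sSup ((fun z => ‖f z‖) '' Metric.sphere (0 : ℂ) r)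

/-- `f` is a transcendental entire function: differentiable on all of `ℂ`
and not (the evaluation of) a polynomial. -/
def EntireTranscendental (f : ℂ → ℂ) : Prop :=
  Differentiable ℂ f ∧ ¬∃ p : Polynomial ℂ, ∀ z, f z = p.eval z

open Metric Set Filter Real

theorem ConvexOn.slope_le_slope {𝕜 : Type*} [Field 𝕜] [LinearOrder 𝕜] [IsStrictOrderedRing 𝕜]
    {s : Set 𝕜} {f : 𝕜 → 𝕜} (hf : ConvexOn 𝕜 s f) {x y z w : 𝕜} (hx : x ∈ s) (hw : w ∈ s)
    (hxy : x < y) (hyz : y ≤ z) (hzw : z < w) :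
    (f y - f x) / (y - x) ≤ (f w - f z) / (w - z) :=
  (hf.secant_mono_aux2 hx hw hxy (hyz.trans_lt hzw)).trans
    (hf.secant_mono_aux3 hx hw (hxy.trans_le hyz) hzw)

theorem div_pow_mul_le_iff_log_le {a b u v : ℝ} (n : ℕ) (ha : 0 < a) (hb : 0 < b) (hu : 0 < u)
    (hv : 0 < v) : (b / a) ^ n * u ≤ v ↔ n * (log b - log a) ≤ log v - log u := by
  rw [← log_le_log_iff (by positivity) hv, log_mul (by positivity) hu.ne', log_pow,
    log_div hb.ne' ha.ne']
  constructor <;> intro h <;> linarith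

section MaxModulus

variable {f : ℂ → ℂ}

theorem exists_norm_eq_maxMod (hf : Continuous f) {r : ℝ} (hr : 0 ≤ r) :
    ∃ z : ℂ, ‖z‖ = r ∧ maxMod f r = ‖f z‖ := by
  obtain ⟨z, hz, hmax⟩ := ((isCompact_sphere (0 : ℂ) r).image
    (continuous_norm.comp hf)).sSup_mem ((NormedSpace.sphere_nonempty.mpr hr).image _)
  exact ⟨z, mem_sphere_zero_iff_norm.mp hz, hmax.symm⟩

theorem norm_le_maxMod (hf : Continuous f) (z : ℂ) : ‖f z‖ ≤ maxMod f ‖z‖ :=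
  le_csSup ((isCompact_sphere (0 : ℂ) _).image (continuous_norm.comp hf)).bddAbove
    ⟨z, mem_sphere_zero_iff_norm.mpr rfl, rfl⟩

theorem norm_le_maxMod_of_norm_le (hf : Differentiable ℂ f) {z : ℂ} {t : ℝ} (hzt : ‖z‖ ≤ t) :
    ‖f z‖ ≤ maxMod f t := by
  rcases hzt.eq_or_lt with rfl | hzt
  · exact norm_le_maxMod hf.continuous z
  have ht : t ≠ 0 := (hzt.trans_le' (norm_nonneg z)).ne'
  refine Complex.norm_le_of_forall_mem_frontier_norm_le isBounded_ball hf.diffContOnCl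
    (fun w hw => ?_) (by rw [closure_ball 0 ht]; exact mem_closedBall_zero_iff.mpr hzt.le)
  rw [frontier_ball 0 ht, mem_sphere_zero_iff_norm] at hw
  exact hw ▸ norm_le_maxMod hf.continuous w

theorem maxMod_mono (hf : Differentiable ℂ f) {s t : ℝ} (hs : 0 ≤ s) (hst : s ≤ t) :
    maxMod f s ≤ maxMod f t := by
  obtain ⟨z, hz, hmax⟩ := exists_norm_eq_maxMod hf.continuous hs
  exact hmax ▸ norm_le_maxMod_of_norm_le hf (hz.trans_le hst)

/-- **Hadamard's three circles theorem**, for the radii `exp x ≤ exp (a x + b y) ≤ exp y`. -/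
theorem maxMod_exp_le_rpow (hf : Differentiable ℂ f) {x y a b : ℝ} (hxy : x ≤ y)
    (ha : 0 ≤ a) (hb : 0 ≤ b) (hab : a + b = 1) :
    maxMod f (exp (a * x + b * y)) ≤ maxMod f (exp x) ^ a * maxMod f (exp y) ^ b := by
  obtain ⟨w, hw, hmax⟩ := exists_norm_eq_maxMod hf.continuous (exp_pos (a * x + b * y)).le
  -- `ζ ↦ w * exp ((ζ - b) * (y - x))` maps the strip `0 ≤ re ≤ 1` onto the annulus
  -- `exp x ≤ |·| ≤ exp y` and sends `b` to `w`.
  set g : ℂ → ℂ := fun ζ => f (w * Complex.exp ((ζ - b) * (y - x)))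
  have hnorm (ζ : ℂ) : ‖w * Complex.exp ((ζ - b) * (y - x))‖ = exp (x + ζ.re * (y - x)) := by
    rw [norm_mul, hw, Complex.norm_exp, ← exp_add]
    congr 1
    simp only [Complex.mul_re, Complex.sub_re, Complex.sub_im, Complex.ofReal_re,
      Complex.ofReal_im]
    linear_combination x * hab
  have hbound {ζ : ℂ} (hζ : ζ.re ≤ 1) : ‖g ζ‖ ≤ maxMod f (exp y) := by
    refine norm_le_maxMod_of_norm_le hf ((hnorm ζ).trans_le (exp_le_exp.mpr ?_))
    nlinarith
  have hg : Differentiable ℂ g := hf.comp (by fun_prop)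
  have key := Complex.HadamardThreeLines.norm_le_interp_of_mem_verticalClosedStrip₀₁' g
    (z := b) (a := maxMod f (exp x)) (b := maxMod f (exp y))
    ⟨by simpa using hb, by simpa using (by linarith : b ≤ 1)⟩ hg.diffContOnCl
    ⟨_, by rintro _ ⟨ζ, hζ, rfl⟩; exact hbound hζ.2⟩
    (fun ζ hζ => by
      have := norm_le_maxMod hf.continuous (w * Complex.exp ((ζ - b) * (y - x)))
      rwa [hnorm, show ζ.re = 0 from hζ, zero_mul, add_zero] at this)
    (fun ζ hζ => hbound (le_of_eq hζ))
  simpa [g, hmax, show 1 - b = a by linarith] using key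

theorem convexOn_log_maxMod_exp (hf : Differentiable ℂ f) {x₀ : ℝ}
    (hpos : 0 < maxMod f (exp x₀)) :
    ConvexOn ℝ (Ici x₀) (fun x => log (maxMod f (exp x))) := by
  have hpos' {x : ℝ} (hx : x₀ ≤ x) : 0 < maxMod f (exp x) :=
    hpos.trans_le (maxMod_mono hf (exp_pos x₀).le (exp_le_exp.mpr hx))
  refine LinearOrder.convexOn_of_lt (convex_Ici x₀) fun x hx y hy hxy a b ha hb hab => ?_
  have hmid : x₀ ≤ a * x + b * y := by
    have : a * x + b * y = x + b * (y - x) := by linear_combination x * hab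
    nlinarith [mem_Ici.mp hx]
  simp only [smul_eq_mul]
  calc log (maxMod f (exp (a * x + b * y)))
      ≤ log (maxMod f (exp x) ^ a * maxMod f (exp y) ^ b) :=
        log_le_log (hpos' hmid) (maxMod_exp_le_rpow hf hxy.le ha.le hb.le hab)
    _ = a * log (maxMod f (exp x)) + b * log (maxMod f (exp y)) := by
        rw [log_mul (rpow_pos_of_pos (hpos' hx) a).ne' (rpow_pos_of_pos (hpos' hy) b).ne',
          log_rpow (hpos' hx), log_rpow (hpos' hy)]

theorem div_pow_mul_maxMod_le_of_le (hf : Differentiable ℂ f) (n : ℕ) {r₀ r₁ s t : ℝ}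
    (hr₀ : 0 < r₀) (hpos : 0 < maxMod f r₀) (hr₀₁ : r₀ < r₁)
    (hgrowth : (r₁ / r₀) ^ n * maxMod f r₀ ≤ maxMod f r₁) (hr₁s : r₁ ≤ s) (hst : s ≤ t) :
    (t / s) ^ n * maxMod f s ≤ maxMod f t := by
  have hs : 0 < s := hr₀.trans (hr₀₁.trans_le hr₁s)
  rcases hst.eq_or_lt with rfl | hst
  · rw [div_self hs.ne', one_pow, one_mul]
  have hposM {r : ℝ} (hr : r₀ ≤ r) : 0 < maxMod f r := hpos.trans_le (maxMod_mono hf hr₀.le hr)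
  have hconv := convexOn_log_maxMod_exp hf (x₀ := log r₀) (by rwa [exp_log hr₀])
  have hslope := hconv.slope_le_slope (y := log r₁) (z := log s) (mem_Ici.mpr le_rfl)
    (log_le_log hr₀ (hr₀₁.le.trans (hr₁s.trans hst.le)) : log r₀ ≤ log t)
    (log_lt_log hr₀ hr₀₁) (log_le_log (hr₀.trans hr₀₁) hr₁s) (log_lt_log hs hst)
  simp only [exp_log hr₀, exp_log (hr₀.trans hr₀₁), exp_log hs, exp_log (hs.trans hst)] at hslope
  rw [div_pow_mul_le_iff_log_le n hr₀ (hr₀.trans hr₀₁) hpos (hposM hr₀₁.le),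
    ← le_div_iff₀ (sub_pos.mpr (log_lt_log hr₀ hr₀₁))] at hgrowth
  rw [div_pow_mul_le_iff_log_le n hs (hs.trans hst) (hposM (hr₀₁.le.trans hr₁s))
    (hposM (hr₀₁.le.trans (hr₁s.trans hst.le))),
    ← le_div_iff₀ (sub_pos.mpr (log_lt_log hs hst))]
  exact hgrowth.trans hslope

end MaxModulus

theorem exists_polynomial_eq_of_norm_le_mul_pow {f : ℂ → ℂ} (hf : Differentiable ℂ f) {n : ℕ}
    {C : ℝ} (hC : ∀ z, 1 ≤ ‖z‖ → ‖f z‖ ≤ C * ‖z‖ ^ n) :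
    ∃ p : Polynomial ℂ, ∀ z, f z = p.eval z := by
  induction n generalizing f C with
  | zero =>
    obtain ⟨B, hB⟩ := (isCompact_closedBall (0 : ℂ) 1).exists_bound_of_continuousOn
      hf.continuous.continuousOn
    have hbdd : Bornology.IsBounded (range f) := by
      refine isBounded_iff_forall_norm_le.mpr ⟨max B C, ?_⟩
      rintro _ ⟨z, rfl⟩
      rcases le_total ‖z‖ 1 with hz | hz
      · exact (hB z (mem_closedBall_zero_iff.mpr hz)).trans (le_max_left B C)
      · exact (show ‖f z‖ ≤ C by simpa using hC z hz).trans (le_max_right B C)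
    obtain ⟨c, hc⟩ := hf.exists_eq_const_of_bounded hbdd
    exact ⟨Polynomial.C c, fun z => by simp [hc]⟩
  | succ n ih =>
    have hg : Differentiable ℂ (dslope f 0) := by
      rw [← differentiableOn_univ] at hf ⊢
      exact (Complex.differentiableOn_dslope univ_mem).mpr hf
    obtain ⟨p, hp⟩ := ih hg (C := C + ‖f 0‖) fun z hz => by
      have hz0 : 0 < ‖z‖ := one_pos.trans_le hz
      have hpow : 1 ≤ ‖z‖ ^ (n + 1) := one_le_pow₀ hz
      rw [dslope_of_ne f (norm_pos_iff.mp hz0), slope_def_module, sub_zero, norm_smul, norm_inv,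
        inv_mul_le_iff₀ hz0]
      calc ‖f z - f 0‖ ≤ ‖f z‖ + ‖f 0‖ := norm_sub_le _ _
        _ ≤ C * ‖z‖ ^ (n + 1) + ‖f 0‖ * ‖z‖ ^ (n + 1) := by
          gcongr
          · exact hC z hz
          · exact le_mul_of_one_le_right (norm_nonneg _) hpow
        _ = ‖z‖ * ((C + ‖f 0‖) * ‖z‖ ^ n) := by ring
    refine ⟨Polynomial.C (f 0) + Polynomial.X * p, fun z => ?_⟩
    have := sub_smul_dslope f 0 z
    rw [sub_zero, smul_eq_mul, hp z] at this
    simp only [Polynomial.eval_add, Polynomial.eval_C, Polynomial.eval_mul, Polynomial.eval_X]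
    linear_combination -this

namespace EntireTranscendental

variable {f : ℂ → ℂ}

theorem exists_mul_pow_lt_norm (hf : EntireTranscendental f) (C : ℝ) (n : ℕ) :
    ∃ z, 1 ≤ ‖z‖ ∧ C * ‖z‖ ^ n < ‖f z‖ := by
  by_contra! h
  exact hf.2 (exists_polynomial_eq_of_norm_le_mul_pow hf.1 h)

theorem exists_one_le_maxMod_pos (hf : EntireTranscendental f) :
    ∃ r, 1 ≤ r ∧ 0 < maxMod f r := by
  obtain ⟨z, hz, hfz⟩ := hf.exists_mul_pow_lt_norm 0 0
  exact ⟨‖z‖, hz, (show 0 < ‖f z‖ by simpa using hfz).trans_le (norm_le_maxMod hf.1.continuous z)⟩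

theorem exists_div_pow_mul_maxMod_le (hf : EntireTranscendental f) (n : ℕ) :
    ∃ ρ, ∀ s t, ρ ≤ s → s ≤ t → (t / s) ^ n * maxMod f s ≤ maxMod f t := by
  obtain ⟨r₀, hr₀, hpos⟩ := hf.exists_one_le_maxMod_pos
  obtain ⟨z, hz, hfz⟩ := hf.exists_mul_pow_lt_norm (maxMod f r₀) n
  have hgrowth : maxMod f r₀ * ‖z‖ ^ n < maxMod f ‖z‖ :=
    hfz.trans_le (norm_le_maxMod hf.1.continuous z)
  have hr₀z : r₀ < ‖z‖ := by
    by_contra! h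
    nlinarith [maxMod_mono hf.1 (norm_nonneg z) h, one_le_pow₀ (n := n) hz]
  refine ⟨‖z‖, fun s t hs hst => div_pow_mul_maxMod_le_of_le hf.1 n (one_pos.trans_le hr₀) hpos
    hr₀z ?_ hs hst⟩
  calc (‖z‖ / r₀) ^ n * maxMod f r₀ ≤ ‖z‖ ^ n * maxMod f r₀ := by
        gcongr
        exact div_le_self (norm_nonneg z) hr₀
    _ ≤ maxMod f ‖z‖ := by linarith

theorem eventually_pow_le_maxMod (hf : EntireTranscendental f) (n : ℕ) :
    ∀ᶠ t in atTop, t ^ n ≤ maxMod f t := by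
  obtain ⟨ρ, hρ⟩ := hf.exists_div_pow_mul_maxMod_le (n + 1)
  obtain ⟨r₀, hr₀, hpos⟩ := hf.exists_one_le_maxMod_pos
  obtain ⟨s, hρs, hr₀s⟩ : ∃ s, ρ ≤ s ∧ r₀ ≤ s := ⟨max ρ r₀, le_max_left _ _, le_max_right _ _⟩
  have hs : 0 < s := one_pos.trans_le (hr₀.trans hr₀s)
  have hMs : 0 < maxMod f s := hpos.trans_le (maxMod_mono hf.1 (by linarith) hr₀s)
  filter_upwards [eventually_ge_atTop s, eventually_ge_atTop (s ^ (n + 1) / maxMod f s)]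
    with t hst ht
  have ht0 : 0 < t := hs.trans_le hst
  calc t ^ n ≤ t ^ n * (t * maxMod f s / s ^ (n + 1)) := by
        refine le_mul_of_one_le_right (by positivity) ?_
        rwa [one_le_div (by positivity), ← div_le_iff₀ hMs]
    _ = (t / s) ^ (n + 1) * maxMod f s := by ring
    _ ≤ maxMod f t := hρ s t hρs hst

end EntireTranscendental

theorem tendsto_atTop_of_mul_le_succ {u c : ℕ → ℝ} (hu : ∀ k, 0 < u k)
    (hc : Tendsto c atTop atTop) (h : ∀ k, u k * c k ≤ u (k + 1)) : Tendsto u atTop atTop := by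
  obtain ⟨K, hK⟩ := eventually_atTop.mp (hc.eventually_ge_atTop 2)
  refine (tendsto_add_atTop_iff_nat K).mp (tendsto_atTop_of_geom_le (hu (0 + K)) one_lt_two
    fun j => ?_)
  calc 2 * u (j + K) ≤ u (j + K) * c (j + K) := by
        rw [mul_comm]
        exact mul_le_mul_of_nonneg_left (hK _ (by omega)) (hu _).le
    _ ≤ u (j + 1 + K) := by
        rw [Nat.add_right_comm]
        exact h _

theorem exists_le_lt_succ_of_monotone {α : Type*} [LinearOrder α] {x : ℕ → α} (hx : Monotone x)
    {N : ℕ} {R : α} (hN : x N ≤ R) (hR : ∃ m, R < x m) :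
    ∃ k, N ≤ k ∧ x k ≤ R ∧ R < x (k + 1) := by
  classical
  obtain ⟨m, hm, hmin⟩ : ∃ m, R < x m ∧ ∀ j < m, x j ≤ R :=
    ⟨Nat.find hR, Nat.find_spec hR, fun j hj => not_lt.mp (Nat.find_min hR hj)⟩
  have hNm : N < m := by
    by_contra! h
    exact (hm.trans_le (hx h)).not_ge hN
  obtain ⟨k, rfl⟩ : ∃ k, m = k + 1 := Nat.exists_eq_succ_of_ne_zero (by omega)
  exact ⟨k, by omega, hmin k k.lt_succ_self, hm⟩

section SquareGrowth

variable {F : ℝ → ℝ} {b : ℝ}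

theorem self_le_of_sq_le (hb : 1 ≤ b) (hF : ∀ t ≥ b, t ^ 2 ≤ F t) {t : ℝ} (ht : b ≤ t) :
    t ≤ F t :=
  (le_self_pow₀ (hb.trans ht) two_ne_zero).trans (hF t ht)

theorem le_iterate_of_sq_le (hb : 1 ≤ b) (hF : ∀ t ≥ b, t ^ 2 ≤ F t) (k : ℕ) : b ≤ F^[k] b := by
  induction k with
  | zero => exact le_rfl
  | succ k ih =>
    rw [Function.iterate_succ_apply']
    exact ih.trans (self_le_of_sq_le hb hF ih)

theorem monotone_iterate_of_sq_le (hb : 1 ≤ b) (hF : ∀ t ≥ b, t ^ 2 ≤ F t) :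
    Monotone fun k => F^[k] b :=
  monotone_nat_of_le_succ fun k => by
    simpa only [Function.iterate_succ_apply'] using
      self_le_of_sq_le hb hF (le_iterate_of_sq_le hb hF k)

theorem tendsto_iterate_of_sq_le (hb : 1 < b) (hF : ∀ t ≥ b, t ^ 2 ≤ F t) :
    Tendsto (fun k => F^[k] b) atTop atTop := by
  refine tendsto_atTop_of_geom_le (one_pos.trans hb) hb fun k => ?_
  have hk := le_iterate_of_sq_le hb.le hF k
  rw [Function.iterate_succ_apply']
  calc b * F^[k] b ≤ F^[k] b ^ 2 := by
        rw [sq]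
        exact mul_le_mul_of_nonneg_right hk (by linarith)
    _ ≤ F (F^[k] b) := hF _ hk

theorem tendsto_pow_mul_iterate_of_sq_le (hb : 1 < b) (hF : ∀ t ≥ b, t ^ 2 ≤ F t) {δ : ℝ}
    (hδ : 0 < δ) : Tendsto (fun k => δ ^ k * F^[k] b) atTop atTop := by
  have hx := le_iterate_of_sq_le hb.le hF
  have hxpos (k : ℕ) : 0 < F^[k] b := (one_pos.trans hb).trans_le (hx k)
  refine tendsto_atTop_of_mul_le_succ (c := fun k => δ * F^[k] b) (fun k => by
    have := hxpos k; positivity) ((tendsto_iterate_of_sq_le hb hF).const_mul_atTop hδ) fun k => ?_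
  calc δ ^ k * F^[k] b * (δ * F^[k] b) = δ ^ (k + 1) * F^[k] b ^ 2 := by ring
    _ ≤ δ ^ (k + 1) * F^[k + 1] b := by
        rw [Function.iterate_succ_apply']
        gcongr
        exact hF _ (hx k)

end SquareGrowth

theorem tendsto_mul_self_atTop_of_pow_succ_le_iterate {F ε : ℝ → ℝ} {R₀ : ℝ}
    (hF : ∀ᶠ t in atTop, t ^ 2 ≤ F t) (hεpos : ∀ r ≥ R₀, 0 < ε r)
    (hεanti : AntitoneOn ε (Ici R₀))
    (hεF : ∀ r ≥ R₀, ∀ n : ℕ, 1 ≤ n → ε r ^ (n + 1) ≤ ε (F^[n] r)) :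
    Tendsto (fun R => ε R * R) atTop atTop := by
  obtain ⟨b, hb⟩ := eventually_atTop.mp (hF.and (eventually_ge_atTop (max R₀ 2)))
  have hbR₀ : R₀ ≤ b := (le_max_left _ _).trans (hb b le_rfl).2
  have hb1 : 1 < b := one_lt_two.trans_le ((le_max_right _ _).trans (hb b le_rfl).2)
  have hsq : ∀ t ≥ b, t ^ 2 ≤ F t := fun t ht => (hb t ht).1
  have horbit := le_iterate_of_sq_le hb1.le hsq
  have hδ : 0 < ε b := hεpos b hbR₀
  refine tendsto_atTop.mpr fun ρ => ?_
  obtain ⟨N, hN⟩ := eventually_atTop.mp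
    ((tendsto_pow_mul_iterate_of_sq_le hb1 hsq hδ).eventually_ge_atTop (ρ / ε b ^ 2))
  refine eventually_atTop.mpr ⟨F^[N] b, fun R hR => ?_⟩
  -- On `[F^[k] b, F^[k+1] b)` we have `ε R ≥ ε (F^[k+1] b) ≥ (ε b) ^ (k + 2)`.
  obtain ⟨k, hNk, hkR, hRk⟩ := exists_le_lt_succ_of_monotone (monotone_iterate_of_sq_le hb1.le hsq)
    hR ((tendsto_iterate_of_sq_le hb1 hsq).eventually_gt_atTop R).exists
  have hRR₀ : R₀ ≤ R := hbR₀.trans ((horbit N).trans hR)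
  have hεR : ε b ^ (k + 2) ≤ ε R :=
    (hεF b hbR₀ (k + 1) k.succ_pos).trans (hεanti hRR₀ (hbR₀.trans (horbit _)) hRk.le)
  calc ρ ≤ ε b ^ 2 * (ε b ^ k * F^[k] b) := by
        rw [← div_le_iff₀' (by positivity)]
        exact hN k hNk
    _ = ε b ^ (k + 2) * F^[k] b := by ring
    _ ≤ ε R * R := mul_le_mul hεR hkR (by linarith [horbit k]) (hεpos R hRR₀).le

theorem simply_connected_fast_escaping_stmt3_general
    (f : ℂ → ℂ) (hf : EntireTranscendental f)
    (R0 : ℝ)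
    (ε : ℝ → ℝ)
    (hε01 : ∀ r ≥ R0, ε r ∈ Set.Ioo (0 : ℝ) 1)
    (hεmono : ∀ r s, R0 ≤ r → r ≤ s → ε s ≤ ε r)
    (hεM : ∀ r ≥ R0, ∀ n : ℕ, 1 ≤ n → ε r ^ (n + 1) ≤ ε ((maxMod f)^[n] r)) :
    ∃ R1 : ℝ, R0 ≤ R1 ∧ ∀ r R : ℝ, R1 ≤ r → r ≤ R →
      (ε r)⁻¹ ^ 3 * maxMod f (ε r * R) ≤ maxMod f R := by
  obtain ⟨ρ, hρ⟩ := hf.exists_div_pow_mul_maxMod_le 3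
  have hεR : Tendsto (fun R => ε R * R) atTop atTop :=
    tendsto_mul_self_atTop_of_pow_succ_le_iterate (hf.eventually_pow_le_maxMod 2)
      (fun r hr => (hε01 r hr).1) (fun r hr _ _ hrs => hεmono r _ hr hrs) hεM
  obtain ⟨R1, hR1⟩ := eventually_atTop.mp
    ((hεR.eventually_ge_atTop ρ).and (eventually_gt_atTop 0))
  refine ⟨max R0 R1, le_max_left _ _, fun r R hr hrR => ?_⟩
  obtain ⟨hρR, hR⟩ := hR1 R ((le_max_right _ _).trans (hr.trans hrR))
  have hrR0 : R0 ≤ r := (le_max_left _ _).trans hr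
  obtain ⟨-, hεr1⟩ := hε01 r hrR0
  have hs : ρ ≤ ε r * R := hρR.trans (by gcongr; exact hεmono r R hrR0 hrR)
  simpa only [div_mul_cancel_right₀ hR.ne', inv_pow] using
    hρ (ε r * R) R hs (mul_le_of_le_one_left hR.le hεr1.le)

theorem simply_connected_fast_escaping_stmt3
    (f : ℂ → ℂ) (hf : EntireTranscendental f)
    (R0 : ℝ) (hR0 : 0 < R0) (hM : ∀ r ≥ R0, r < maxMod f r)
    (ε : ℝ → ℝ)
    (hε01 : ∀ r ≥ R0, ε r ∈ Set.Ioo (0 : ℝ) 1)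
    (hεmono : ∀ r s, R0 ≤ r → r ≤ s → ε s ≤ ε r)
    (hεM : ∀ r ≥ R0, ∀ n : ℕ, 1 ≤ n → ε r ^ (n + 1) ≤ ε ((maxMod f)^[n] r)) :
    ∃ R1 : ℝ, R0 ≤ R1 ∧ ∀ r R : ℝ, R1 ≤ r → r ≤ R →
      (ε r)⁻¹ ^ 3 * maxMod f (ε r * R) ≤ maxMod f R :=
  simply_connected_fast_escaping_stmt3_general f hf R0 ε hε01 hεmono hεM
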